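/- Let s ∈ ℝ³ with ‖s‖ < 1, and let V and H be 3×3 real symmetric positive definite matrices. For unit vectors a, a' ∈ ℝ³, one has tr[H (V + F(a,s))⁻¹] ≤ tr[H (V + F(a',s))⁻¹] if and only if (aᵀ (I − s sᵀ + V⁻¹) a) / (aᵀ V⁻¹ H V⁻¹ a) ≤ (a'ᵀ (I − s sᵀ + V⁻¹) a') / (a'ᵀ V⁻¹ H V⁻¹ a'). In particular, minimizing a ↦ tr[H (V + F(a,s))⁻¹] over the unit sphere is equivalent to minimizing the Rayleigh-type quotient aᵀ (I − s sᵀ + V⁻¹) a / (aᵀ V⁻¹ H V⁻¹ a). -/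

import Mathlib

/-!
By the Sherman–Morrison formula,
`(V + F(a,s))⁻¹ = V⁻¹ - V⁻¹ a aᵀ V⁻¹ / (1 - (a·s)² + aᵀ V⁻¹ a)`, and for a unit vector `a` the
denominator is `D(a) = aᵀ (I - s sᵀ + V⁻¹) a`. Taking the trace against `H` gives
`tr[H (V + F(a,s))⁻¹] = tr[H V⁻¹] - N(a) / D(a)` with `N(a) = aᵀ V⁻¹ H V⁻¹ a`. Both `N` and `D`
are positive, so a smaller trace means a larger `N / D`, i.e. a smaller `D / N`.
-/

open Matrix

/-- Fisher matrix of the projective measurement along Bloch direction `a`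
on the qubit state with Bloch vector `s`: `F(a,s) = a aᵀ / (1 - (a·s)²)`. -/
noncomputable def fisherMat (a s : Fin 3 → ℝ) : Matrix (Fin 3) (Fin 3) ℝ :=
  (1 - (a ⬝ᵥ s) ^ 2)⁻¹ • vecMulVec a a

namespace Matrix

variable {n K : Type*} [Fintype n]

theorem trace_mul_vecMulVec [CommSemiring K] (M : Matrix n n K) (u v : n → K) :
    (M * vecMulVec u v).trace = v ⬝ᵥ M *ᵥ u := by
  rw [mul_vecMulVec, trace_vecMulVec, dotProduct_comm]

variable [DecidableEq n] [Field K]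

theorem inv_add_smul_vecMulVec {V : Matrix n n K} (hV : IsUnit V) (u v : n → K) {c : K}
    (hc : c ≠ 0) (hd : c + v ⬝ᵥ V⁻¹ *ᵥ u ≠ 0) :
    (V + c⁻¹ • vecMulVec u v)⁻¹ =
      V⁻¹ - (c + v ⬝ᵥ V⁻¹ *ᵥ u)⁻¹ • (V⁻¹ * vecMulVec u v * V⁻¹) := by
  refine inv_eq_right_inv ?_
  set q := v ⬝ᵥ V⁻¹ *ᵥ u
  set P := vecMulVec u v
  have hVV : V * V⁻¹ = 1 := mul_nonsing_inv V ((isUnit_iff_isUnit_det V).1 hV)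
  have hPWP : P * V⁻¹ * P = q • P := by
    rw [vecMulVec_mul, vecMulVec_mul_vecMulVec, vecMulVec_smul, ← dotProduct_mulVec]
  have hscalar : c⁻¹ - (c + q)⁻¹ - c⁻¹ * (c + q)⁻¹ * q = 0 := by
    field_simp
    ring
  calc (V + c⁻¹ • P) * (V⁻¹ - (c + q)⁻¹ • (V⁻¹ * P * V⁻¹))
      = V * V⁻¹ - (c + q)⁻¹ • (V * V⁻¹ * P * V⁻¹) + c⁻¹ • (P * V⁻¹)
          - (c⁻¹ * (c + q)⁻¹) • ((P * V⁻¹ * P) * V⁻¹) := by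
        simp only [Matrix.add_mul, Matrix.mul_sub, Matrix.mul_smul, Matrix.smul_mul,
          Matrix.mul_assoc]
        module
    _ = 1 := by
        rw [hVV, hPWP, Matrix.one_mul, Matrix.smul_mul]
        linear_combination (norm := module) hscalar • (P * V⁻¹)

theorem trace_mul_inv_add_smul_vecMulVec {V : Matrix n n K} (hV : IsUnit V) (H : Matrix n n K)
    (u v : n → K) {c : K} (hc : c ≠ 0) (hd : c + v ⬝ᵥ V⁻¹ *ᵥ u ≠ 0) :
    (H * (V + c⁻¹ • vecMulVec u v)⁻¹).trace =
      (H * V⁻¹).trace - (v ⬝ᵥ (V⁻¹ * H * V⁻¹) *ᵥ u) / (c + v ⬝ᵥ V⁻¹ *ᵥ u) := by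
  have hcyc : (H * (V⁻¹ * vecMulVec u v * V⁻¹)).trace =
      (V⁻¹ * H * V⁻¹ * vecMulVec u v).trace := by
    rw [← Matrix.mul_assoc, trace_mul_comm, ← Matrix.mul_assoc, ← Matrix.mul_assoc]
  rw [inv_add_smul_vecMulVec hV u v hc hd, Matrix.mul_sub, Matrix.mul_smul, trace_sub,
    trace_smul, hcyc, trace_mul_vecMulVec, smul_eq_mul, div_eq_inv_mul]

theorem PosDef.inv_mul_mul_inv [PartialOrder K] [StarRing K] {V H : Matrix n n K}
    (hV : V.PosDef) (hH : H.PosDef) : (V⁻¹ * H * V⁻¹).PosDef := by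
  have h := hH.conjTranspose_mul_mul_same
    (mulVec_injective_iff_isUnit.2 (isUnit_nonsing_inv_iff.2 hV.isUnit))
  rwa [hV.inv.isHermitian.eq] at h

end Matrix

section

variable {n : Type*} [Fintype n]

theorem sq_dotProduct_le (a s : n → ℝ) : (a ⬝ᵥ s) ^ 2 ≤ (a ⬝ᵥ a) * (s ⬝ᵥ s) := by
  simpa [dotProduct, sq] using Finset.sum_mul_sq_le_sq_mul_sq Finset.univ a s

theorem one_sub_sq_dotProduct_pos {a s : n → ℝ} (hs : √(s ⬝ᵥ s) < 1) (ha : a ⬝ᵥ a = 1) :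
    0 < 1 - (a ⬝ᵥ s) ^ 2 := by
  have hss : s ⬝ᵥ s < 1 := by simpa using (Real.sqrt_lt' one_pos).1 hs
  nlinarith [sq_dotProduct_le a s]

theorem ne_zero_of_dotProduct_self_eq_one {a : n → ℝ} (ha : a ⬝ᵥ a = 1) : a ≠ 0 := by
  rintro rfl
  simp at ha

variable [DecidableEq n]

theorem dotProduct_one_sub_vecMulVec_add_mulVec {R : Type*} [CommRing R] {a : n → R}
    (ha : a ⬝ᵥ a = 1) (s : n → R) (W : Matrix n n R) :
    a ⬝ᵥ ((1 - vecMulVec s s + W) *ᵥ a) = 1 - (a ⬝ᵥ s) ^ 2 + a ⬝ᵥ W *ᵥ a := by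
  rw [add_mulVec, sub_mulVec, one_mulVec, vecMulVec_mulVec, dotProduct_add, dotProduct_sub,
    dotProduct_smul, ha, dotProduct_comm s a]
  simp [sq]

theorem dotProduct_one_sub_vecMulVec_add_mulVec_pos {a s : n → ℝ} {W : Matrix n n ℝ}
    (hW : W.PosDef) (hs : √(s ⬝ᵥ s) < 1) (ha : a ⬝ᵥ a = 1) :
    0 < a ⬝ᵥ ((1 - vecMulVec s s + W) *ᵥ a) := by
  have hWa := hW.dotProduct_mulVec_pos (ne_zero_of_dotProduct_self_eq_one ha)
  rw [star_trivial] at hWa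
  rw [dotProduct_one_sub_vecMulVec_add_mulVec ha]
  linarith [one_sub_sq_dotProduct_pos hs ha]

end

theorem trace_mul_inv_add_fisherMat {V : Matrix (Fin 3) (Fin 3) ℝ} (hV : V.PosDef)
    (H : Matrix (Fin 3) (Fin 3) ℝ) {a s : Fin 3 → ℝ} (hs : √(s ⬝ᵥ s) < 1) (ha : a ⬝ᵥ a = 1) :
    (H * (V + fisherMat a s)⁻¹).trace = (H * V⁻¹).trace -
      (a ⬝ᵥ (V⁻¹ * H * V⁻¹) *ᵥ a) / (a ⬝ᵥ ((1 - vecMulVec s s + V⁻¹) *ᵥ a)) := by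
  have hd := dotProduct_one_sub_vecMulVec_add_mulVec_pos hV.inv hs ha
  rw [dotProduct_one_sub_vecMulVec_add_mulVec ha] at hd ⊢
  exact trace_mul_inv_add_smul_vecMulVec hV.isUnit H a a (one_sub_sq_dotProduct_pos hs ha).ne'
    hd.ne'

theorem trace_inv_iff_rayleigh_quotient_general
    (s : Fin 3 → ℝ) (hs : Real.sqrt (s ⬝ᵥ s) < 1)
    (V H : Matrix (Fin 3) (Fin 3) ℝ)
    (hV : V.PosDef) (hH : H.PosDef)
    (a a' : Fin 3 → ℝ) (ha : a ⬝ᵥ a = 1) (ha' : a' ⬝ᵥ a' = 1) :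
    (H * (V + fisherMat a s)⁻¹).trace ≤ (H * (V + fisherMat a' s)⁻¹).trace
      ↔ (a ⬝ᵥ ((1 - vecMulVec s s + V⁻¹) *ᵥ a)) / (a ⬝ᵥ ((V⁻¹ * H * V⁻¹) *ᵥ a))
          ≤ (a' ⬝ᵥ ((1 - vecMulVec s s + V⁻¹) *ᵥ a')) / (a' ⬝ᵥ ((V⁻¹ * H * V⁻¹) *ᵥ a')) := by
  have hN {b : Fin 3 → ℝ} (hb : b ⬝ᵥ b = 1) : 0 < b ⬝ᵥ (V⁻¹ * H * V⁻¹) *ᵥ b := by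
    simpa using (hV.inv_mul_mul_inv hH).dotProduct_mulVec_pos
      (ne_zero_of_dotProduct_self_eq_one hb)
  have hD {b : Fin 3 → ℝ} (hb : b ⬝ᵥ b = 1) : 0 < b ⬝ᵥ ((1 - vecMulVec s s + V⁻¹) *ᵥ b) :=
    dotProduct_one_sub_vecMulVec_add_mulVec_pos hV.inv hs hb
  rw [trace_mul_inv_add_fisherMat hV H hs ha, trace_mul_inv_add_fisherMat hV H hs ha',
    sub_le_sub_iff_left, ← inv_le_inv₀ (div_pos (hN ha) (hD ha)) (div_pos (hN ha') (hD ha')),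
    inv_div, inv_div]

/-- Minimizing `a ↦ tr[H (V + F(a,s))⁻¹]` over unit vectors is equivalent to
minimizing the Rayleigh-type quotient
`aᵀ(I − ssᵀ + V⁻¹)a / (aᵀ V⁻¹ H V⁻¹ a)`. -/
theorem trace_inv_iff_rayleigh_quotient
    (s : Fin 3 → ℝ) (hs : Real.sqrt (s ⬝ᵥ s) < 1)
    (V H : Matrix (Fin 3) (Fin 3) ℝ)
    (hV : V.PosDef) (hVsymm : V.IsSymm) (hH : H.PosDef) (hHsymm : H.IsSymm)
    (a a' : Fin 3 → ℝ) (ha : a ⬝ᵥ a = 1) (ha' : a' ⬝ᵥ a' = 1) :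
    (H * (V + fisherMat a s)⁻¹).trace ≤ (H * (V + fisherMat a' s)⁻¹).trace
      ↔ (a ⬝ᵥ ((1 - vecMulVec s s + V⁻¹) *ᵥ a)) / (a ⬝ᵥ ((V⁻¹ * H * V⁻¹) *ᵥ a))
          ≤ (a' ⬝ᵥ ((1 - vecMulVec s s + V⁻¹) *ᵥ a')) / (a' ⬝ᵥ ((V⁻¹ * H * V⁻¹) *ᵥ a')) :=
  trace_inv_iff_rayleigh_quotient_general s hs V H hV hH a a' ha ha'
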